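/- For Ψ₂(ξ) := dist²(ξ, SO(n)) on ℝ^{n×n} (squared Frobenius distance to the special orthogonal group), the recession function of Ψ₂^{1/2} is (Ψ₂^{1/2})^∞(ξ) = |ξ|, and consequently, with h(ξ) = min(Ψ₂(ξ), ℓΨ₂^{1/2}(ξ)), the recession function of its quasiconvex envelope is h^{qc,∞}(ξ) = ℓ|ξ|. -/

import Mathlib

open MeasureTheory Filter Set

noncomputable section

/-- Frobenius norm of a real matrix. -/
def frob {m n : ℕ} (ξ : Matrix (Fin m) (Fin n) ℝ) : ℝ :=
  Real.sqrt (∑ i, ∑ j, (ξ i j) ^ 2)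

/-- Convex envelope on a set `s`: the pointwise supremum of all functions convex on `s`
and bounded above by `f` on `s`. -/
def convEnvOn {E : Type*} [AddCommGroup E] [Module ℝ E] (s : Set E) (f : E → ℝ) : E → ℝ :=
  fun x => sSup {y | ∃ g : E → ℝ, ConvexOn ℝ s g ∧ (∀ z ∈ s, g z ≤ f z) ∧ y = g x}

/-- The open unit cube `(0,1)^n`. -/
def unitCube (n : ℕ) : Set (Fin n → ℝ) := Set.univ.pi fun _ => Set.Ioo (0 : ℝ) 1

/-- The gradient of `φ : ℝ^n → ℝ^m` as an `m × n` matrix. -/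
def gradMatrix {m n : ℕ} (φ : (Fin n → ℝ) → (Fin m → ℝ)) (x : Fin n → ℝ) :
    Matrix (Fin m) (Fin n) ℝ := fun i j => fderiv ℝ φ x (Pi.single j 1) i

/-- Smooth test functions compactly supported in the open unit cube. -/
def testFuns (m n : ℕ) : Set ((Fin n → ℝ) → (Fin m → ℝ)) :=
  {φ | ContDiff ℝ (⊤ : ℕ∞) φ ∧ HasCompactSupport φ ∧ tsupport φ ⊆ unitCube n}

/-- The quasiconvex envelope of `h`. -/
def qcEnv {m n : ℕ} (h : Matrix (Fin m) (Fin n) ℝ → ℝ)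
    (ξ : Matrix (Fin m) (Fin n) ℝ) : ℝ :=
  sInf {y | ∃ φ ∈ testFuns m n, y = ∫ x in unitCube n, h (ξ + gradMatrix φ x)}

/-- The recession function `F^∞(ξ) = limsup_{t→∞} F(tξ)/t`. -/
def recession {m n : ℕ} (F : Matrix (Fin m) (Fin n) ℝ → ℝ)
    (ξ : Matrix (Fin m) (Fin n) ℝ) : ℝ :=
  Filter.limsup (fun t : ℝ => F (t • ξ) / t) Filter.atTop

/-! ### Auxiliary material -/

/-- The matrix-to-Euclidean-space identification. -/
def matToE {n : ℕ} : Matrix (Fin n) (Fin n) ℝ →ₗ[ℝ] EuclideanSpace ℝ (Fin n × Fin n) where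
  toFun M := WithLp.toLp 2 (fun p : Fin n × Fin n => M p.1 p.2)
  map_add' _ _ := rfl
  map_smul' _ _ := rfl

lemma norm_matToE {n : ℕ} (ξ : Matrix (Fin n) (Fin n) ℝ) : ‖matToE ξ‖ = frob ξ := by
  rw [EuclideanSpace.norm_eq, frob]
  congr 1
  rw [Fintype.sum_prod_type]
  simp [matToE, sq_abs]
  rfl

def SOs (n : ℕ) : Set (Matrix (Fin n) (Fin n) ℝ) :=
  {R | R.transpose * R = 1 ∧ R.det = 1}

def Tset (n : ℕ) : Set (EuclideanSpace ℝ (Fin n × Fin n)) := matToE '' SOs n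

lemma Tset_nonempty (n : ℕ) : (Tset n).Nonempty :=
  ⟨matToE 1, 1, ⟨by simp, by simp⟩, rfl⟩

lemma norm_of_mem_Tset {n : ℕ} {v : EuclideanSpace ℝ (Fin n × Fin n)} (hv : v ∈ Tset n) :
    ‖v‖ = Real.sqrt n := by
  obtain ⟨R, ⟨hR, -⟩, rfl⟩ := hv
  rw [norm_matToE, frob]
  congr 1
  have key : ∀ j, ∑ i, R i j ^ 2 = 1 := by
    intro j
    have := congrArg (fun M => M j j) hR
    simpa [Matrix.mul_apply, Matrix.one_apply, sq] using this
  rw [Finset.sum_comm]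
  simp [key]

/-- The distance to `SO(n)` in the Frobenius norm. -/
def Dd {n : ℕ} (ξ : Matrix (Fin n) (Fin n) ℝ) : ℝ := Metric.infDist (matToE ξ) (Tset n)

lemma sInf_eq_Dd {n : ℕ} (ξ : Matrix (Fin n) (Fin n) ℝ) :
    sInf {d | ∃ R : Matrix (Fin n) (Fin n) ℝ,
        R.transpose * R = 1 ∧ R.det = 1 ∧ d = frob (ξ - R)} = Dd ξ := by
  have hset : {d | ∃ R : Matrix (Fin n) (Fin n) ℝ,
      R.transpose * R = 1 ∧ R.det = 1 ∧ d = frob (ξ - R)}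
      = (fun y => dist (matToE ξ) y) '' Tset n := by
    ext d
    constructor
    · rintro ⟨R, h1, h2, rfl⟩
      exact ⟨matToE R, ⟨R, ⟨h1, h2⟩, rfl⟩, by
        simp only [dist_eq_norm, ← map_sub, norm_matToE]⟩
    · rintro ⟨v, ⟨R, ⟨h1, h2⟩, rfl⟩, rfl⟩
      exact ⟨R, h1, h2, by simp only [dist_eq_norm, ← map_sub, norm_matToE]⟩
  rw [hset, Dd, Metric.infDist_eq_iInf, Set.image_eq_range]
  rfl

lemma Dd_nonneg {n : ℕ} (ξ : Matrix (Fin n) (Fin n) ℝ) : 0 ≤ Dd ξ := Metric.infDist_nonneg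

lemma Dd_le {n : ℕ} (ξ : Matrix (Fin n) (Fin n) ℝ) : Dd ξ ≤ frob ξ + Real.sqrt n := by
  have h1 : matToE (1 : Matrix (Fin n) (Fin n) ℝ) ∈ Tset n := ⟨1, ⟨by simp, by simp⟩, rfl⟩
  calc Dd ξ ≤ dist (matToE ξ) (matToE 1) := Metric.infDist_le_dist_of_mem h1
  _ ≤ ‖matToE ξ‖ + ‖matToE (1 : Matrix (Fin n) (Fin n) ℝ)‖ := by
      rw [dist_eq_norm]; exact norm_sub_le _ _
  _ = frob ξ + Real.sqrt n := by rw [norm_matToE, norm_of_mem_Tset h1]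

lemma Dd_ge {n : ℕ} (ξ : Matrix (Fin n) (Fin n) ℝ) : frob ξ - Real.sqrt n ≤ Dd ξ := by
  rw [← sInf_eq_Dd]
  refine le_csInf ⟨frob (ξ - 1), 1, by simp, by simp, rfl⟩ ?_
  rintro d ⟨R, h1, h2, rfl⟩
  have hR : frob R = Real.sqrt n := by
    rw [← norm_matToE]; exact norm_of_mem_Tset ⟨R, ⟨h1, h2⟩, rfl⟩
  calc frob ξ - Real.sqrt n = ‖matToE ξ‖ - ‖matToE R‖ := by rw [norm_matToE, norm_matToE, hR]
  _ ≤ ‖matToE ξ - matToE R‖ := norm_sub_norm_le _ _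
  _ = frob (ξ - R) := by rw [← map_sub, norm_matToE]

lemma frob_smul {n : ℕ} (t : ℝ) (ht : 0 ≤ t) (ξ : Matrix (Fin n) (Fin n) ℝ) :
    frob (t • ξ) = t * frob ξ := by
  rw [← norm_matToE, _root_.map_smul, norm_smul, Real.norm_eq_abs, abs_of_nonneg ht, norm_matToE]

lemma tendsto_of_bound {n : ℕ} (F : Matrix (Fin n) (Fin n) ℝ → ℝ) (a C : ℝ)
    (h : ∀ η, |F η - a * frob η| ≤ C) (ξ : Matrix (Fin n) (Fin n) ℝ) :
    Filter.Tendsto (fun t : ℝ => F (t • ξ) / t) Filter.atTop (nhds (a * frob ξ)) := by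
  have key : Tendsto (fun t : ℝ => F (t • ξ) / t - a * frob ξ) atTop (nhds 0) := by
    apply squeeze_zero_norm' (a := fun t : ℝ => C / t)
    · filter_upwards [eventually_ge_atTop (1 : ℝ)] with t ht
      have ht0 : (0 : ℝ) < t := lt_of_lt_of_le one_pos ht
      have heq : F (t • ξ) / t - a * frob ξ = (F (t • ξ) - a * frob (t • ξ)) / t := by
        rw [frob_smul t ht0.le]
        field_simp
      rw [heq, Real.norm_eq_abs, abs_div, abs_of_pos ht0]
      gcongr
      exact h _
    · simpa using tendsto_const_nhds.div_atTop tendsto_id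
  have := key.add_const (a * frob ξ)
  simpa using this

lemma integral_fderiv_component {n m : ℕ} (φ : (Fin n → ℝ) → (Fin m → ℝ))
    (hφ : ContDiff ℝ (⊤ : ℕ∞) φ) (hc : HasCompactSupport φ) (i : Fin m) (j : Fin n) :
    ∫ x : Fin n → ℝ, fderiv ℝ φ x (Pi.single j 1) i = 0 := by
  set ψ : (Fin n → ℝ) → ℝ := fun x => φ x i with hψdef
  have hψc : HasCompactSupport ψ := hc.comp_left (g := fun v : Fin m → ℝ => v i) rfl
  have hψ : ContDiff ℝ (⊤ : ℕ∞) ψ :=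
    (ContinuousLinearMap.proj (R := ℝ) (φ := fun _ : Fin m => ℝ) i).contDiff.comp hφ
  obtain ⟨K, hlip⟩ := ContDiff.lipschitzWith_of_hasCompactSupport hψc hψ (by simp)
  have h1 : LipschitzWith 0 (fun _ : Fin n → ℝ => (1 : ℝ)) := LipschitzWith.const 1
  have key := LipschitzWith.integral_lineDeriv_mul_eq (μ := volume) h1 hlip hψc
    (-(Pi.single j 1))
  have hL : ∀ x : Fin n → ℝ,
      lineDeriv ℝ (fun _ : Fin n → ℝ => (1 : ℝ)) x (-(Pi.single j 1)) = 0 := by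
    intro x; simp [lineDeriv]
  simp only [hL, zero_mul, integral_zero, neg_neg, mul_one] at key
  have hfd : ∀ x, fderiv ℝ φ x (Pi.single j 1) i = lineDeriv ℝ ψ x (Pi.single j 1) := by
    intro x
    have hφd : DifferentiableAt ℝ φ x := (hφ.differentiable (by simp)) x
    have hcomp : fderiv ℝ ψ x
        = (ContinuousLinearMap.proj (R := ℝ) (φ := fun _ : Fin m => ℝ) i).comp (fderiv ℝ φ x) :=
      ((ContinuousLinearMap.proj (R := ℝ) (φ := fun _ : Fin m => ℝ) i).hasFDerivAt.comp x
        hφd.hasFDerivAt).fderiv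
    have hψd : DifferentiableAt ℝ ψ x :=
      ((ContinuousLinearMap.proj (R := ℝ) (φ := fun _ : Fin m => ℝ) i).differentiableAt).comp x hφd
    rw [hψd.lineDeriv_eq_fderiv, hcomp]
    rfl
  rw [show (fun x : Fin n → ℝ => fderiv ℝ φ x (Pi.single j 1) i)
      = fun x => lineDeriv ℝ ψ x (Pi.single j 1) from funext hfd]
  exact key.symm

lemma measurableSet_unitCube (n : ℕ) : MeasurableSet (unitCube n) :=
  MeasurableSet.univ_pi fun _ => measurableSet_Ioo

lemma volume_unitCube (n : ℕ) : volume (unitCube n) = 1 := by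
  rw [unitCube, volume_pi_pi]
  simp

lemma integrableOn_unitCube {n : ℕ} {F : Type*} [NormedAddCommGroup F]
    {f : (Fin n → ℝ) → F} (hf : Continuous f) : IntegrableOn f (unitCube n) volume := by
  have hK : IsCompact (Set.univ.pi fun _ : Fin n => Icc (0 : ℝ) 1) :=
    isCompact_univ_pi fun _ => isCompact_Icc
  exact (hf.continuousOn.integrableOn_compact hK).mono_set
    (Set.pi_mono fun i _ => Ioo_subset_Icc_self)

lemma continuous_gradE {n : ℕ} (φ : (Fin n → ℝ) → (Fin n → ℝ)) (hφ : ContDiff ℝ (⊤ : ℕ∞) φ) :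
    Continuous fun x => (matToE (gradMatrix φ x) : EuclideanSpace ℝ (Fin n × Fin n)) := by
  have h1 : Continuous (fderiv ℝ φ) := hφ.continuous_fderiv (by simp)
  refine (PiLp.continuous_toLp 2 _).comp ?_
  apply continuous_pi
  intro p
  exact (continuous_apply p.1).comp (h1.clm_apply continuous_const)

lemma integral_gradE {n : ℕ} (φ : (Fin n → ℝ) → (Fin n → ℝ)) (hφ : φ ∈ testFuns n n) :
    ∫ x in unitCube n, (matToE (gradMatrix φ x) : EuclideanSpace ℝ (Fin n × Fin n)) = 0 := by
  obtain ⟨hsm, hcs, hsupp⟩ := hφ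
  set f0 : (Fin n → ℝ) → EuclideanSpace ℝ (Fin n × Fin n) :=
    fun x => matToE (gradMatrix φ x) with hf0
  have hgrad_zero : ∀ x, fderiv ℝ φ x = 0 → f0 x = 0 := by
    intro x hx
    have : gradMatrix φ x = 0 := by
      funext i j
      simp [gradMatrix, hx]
    simp [hf0, this]
  have hsupp0 : Function.support f0 ⊆ tsupport φ := by
    intro x hx
    by_contra hxt
    have : fderiv ℝ φ x = 0 := by
      have := support_fderiv_subset (𝕜 := ℝ) (f := φ)
      by_contra hne
      exact hxt (this hne)
    exact hx (hgrad_zero x this)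
  have hc0 : HasCompactSupport f0 := hcs.mono' hsupp0
  have hcont0 : Continuous f0 := continuous_gradE φ hsm
  have hint0 : Integrable f0 volume := hcont0.integrable_of_hasCompactSupport hc0
  have hcube : ∫ x in unitCube n, f0 x = ∫ x, f0 x := by
    apply setIntegral_eq_integral_of_forall_compl_eq_zero
    intro x hx
    have hxt : x ∉ tsupport φ := fun h => hx (hsupp h)
    have : fderiv ℝ φ x = 0 := by
      by_contra hne
      exact hxt (support_fderiv_subset ℝ hne)
    exact hgrad_zero x this
  rw [hcube]
  have hcomp : ∀ p : Fin n × Fin n, (∫ x, f0 x) p = 0 := by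
    intro p
    have hL := (EuclideanSpace.proj (𝕜 := ℝ) (ι := Fin n × Fin n) p).integral_comp_comm hint0
    have : ∫ x, (f0 x) p = (∫ x, f0 x) p := hL
    rw [← this]
    have : (fun x => (f0 x) p) = fun x => fderiv ℝ φ x (Pi.single p.2 1) p.1 := rfl
    rw [this]
    exact integral_fderiv_component φ hsm hcs p.1 p.2
  ext p
  exact hcomp p

theorem stmt13 (n : ℕ) (hn : 1 ≤ n) (ℓ : ℝ) (hℓ : 0 < ℓ)
    (Ψ₂ : Matrix (Fin n) (Fin n) ℝ → ℝ)
    (hΨ₂ : ∀ ξ, Ψ₂ ξ =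
      (sInf {d | ∃ R : Matrix (Fin n) (Fin n) ℝ,
        R.transpose * R = 1 ∧ R.det = 1 ∧ d = frob (ξ - R)}) ^ 2) :
    (∀ ξ,
      Filter.limsup (fun t : ℝ => Real.sqrt (Ψ₂ (t • ξ)) / t) Filter.atTop = frob ξ ∧
      Filter.Tendsto (fun t : ℝ => Real.sqrt (Ψ₂ (t • ξ)) / t) Filter.atTop
        (nhds (frob ξ))) ∧
    (∀ ξ, recession (qcEnv (fun η => min (Ψ₂ η) (ℓ * Real.sqrt (Ψ₂ η)))) ξ
        = ℓ * frob ξ) := by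
  have hΨD : ∀ ζ, Ψ₂ ζ = (Dd ζ) ^ 2 := fun ζ => by rw [hΨ₂ ζ, sInf_eq_Dd]
  have hsq : ∀ ζ, Real.sqrt (Ψ₂ ζ) = Dd ζ := fun ζ => by
    rw [hΨD ζ, Real.sqrt_sq (Dd_nonneg ζ)]
  -- Part 1
  have hD : ∀ η : Matrix (Fin n) (Fin n) ℝ, |Dd η - 1 * frob η| ≤ Real.sqrt n := by
    intro η
    rw [one_mul]
    exact abs_le.mpr ⟨by linarith [Dd_ge η], by linarith [Dd_le η]⟩
  have part1 : ∀ ξ : Matrix (Fin n) (Fin n) ℝ,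
      Filter.Tendsto (fun t : ℝ => Real.sqrt (Ψ₂ (t • ξ)) / t) Filter.atTop
        (nhds (frob ξ)) := by
    intro ξ
    have := tendsto_of_bound Dd 1 (Real.sqrt n) hD ξ
    rw [one_mul] at this
    simpa only [hsq] using this
  -- Part 2
  set C₂ : ℝ := ℓ * Real.sqrt n + ℓ ^ 2 with hC₂def
  have hC₂ : 0 ≤ C₂ := by positivity
  have hval : ∀ ζ, min (Ψ₂ ζ) (ℓ * Real.sqrt (Ψ₂ ζ)) = min ((Dd ζ) ^ 2) (ℓ * Dd ζ) := by
    intro ζ; rw [hsq ζ, hΨD ζ]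
  have hlow : ∀ ζ : Matrix (Fin n) (Fin n) ℝ,
      ℓ * frob ζ - C₂ ≤ min ((Dd ζ) ^ 2) (ℓ * Dd ζ) := by
    intro ζ
    have hge := Dd_ge ζ
    have hnn := Dd_nonneg ζ
    have hs : (0:ℝ) ≤ Real.sqrt n := Real.sqrt_nonneg _
    rcases le_or_gt ℓ (Dd ζ) with hcase | hcase
    · refine le_min ?_ ?_ <;> nlinarith
    · have h0 : (0:ℝ) ≤ min ((Dd ζ) ^ 2) (ℓ * Dd ζ) :=
        le_min (sq_nonneg _) (mul_nonneg hℓ.le hnn)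
      nlinarith
  have hup : ∀ ζ : Matrix (Fin n) (Fin n) ℝ,
      min ((Dd ζ) ^ 2) (ℓ * Dd ζ) ≤ ℓ * frob ζ + C₂ := by
    intro ζ
    have hle := Dd_le ζ
    have hs : (0:ℝ) ≤ Real.sqrt n := Real.sqrt_nonneg _
    calc min ((Dd ζ) ^ 2) (ℓ * Dd ζ) ≤ ℓ * Dd ζ := min_le_right _ _
    _ ≤ ℓ * frob ζ + C₂ := by nlinarith
  -- lower bound for every member integral
  have hintlow : ∀ (η : Matrix (Fin n) (Fin n) ℝ) (φ : (Fin n → ℝ) → (Fin n → ℝ)),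
      φ ∈ testFuns n n →
      ℓ * frob η - C₂ ≤ ∫ x in unitCube n,
        min (Ψ₂ (η + gradMatrix φ x)) (ℓ * Real.sqrt (Ψ₂ (η + gradMatrix φ x))) := by
    intro η φ hφ
    set G : (Fin n → ℝ) → EuclideanSpace ℝ (Fin n × Fin n) :=
      fun x => matToE η + matToE (gradMatrix φ x) with hG
    have hGc : Continuous G := continuous_const.add (continuous_gradE φ hφ.1)
    have hDdEq : ∀ x, Dd (η + gradMatrix φ x) = Metric.infDist (G x) (Tset n) := by
      intro x; rw [Dd, map_add]
    have hieq : ∀ x, min (Ψ₂ (η + gradMatrix φ x)) (ℓ * Real.sqrt (Ψ₂ (η + gradMatrix φ x)))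
        = min ((Metric.infDist (G x) (Tset n)) ^ 2) (ℓ * Metric.infDist (G x) (Tset n)) := by
      intro x; rw [hval, hDdEq]
    have hHc : Continuous fun x =>
        min (Ψ₂ (η + gradMatrix φ x)) (ℓ * Real.sqrt (Ψ₂ (η + gradMatrix φ x))) := by
      rw [show (fun x => min (Ψ₂ (η + gradMatrix φ x))
            (ℓ * Real.sqrt (Ψ₂ (η + gradMatrix φ x))))
          = fun x => min ((Metric.infDist (G x) (Tset n)) ^ 2)
            (ℓ * Metric.infDist (G x) (Tset n)) from funext hieq]
      have hc1 : Continuous fun x => Metric.infDist (G x) (Tset n) :=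
        (Metric.continuous_infDist_pt (Tset n)).comp hGc
      exact Continuous.min (hc1.pow 2) (continuous_const.mul hc1)
    have hint1 : IntegrableOn (fun x =>
        min (Ψ₂ (η + gradMatrix φ x)) (ℓ * Real.sqrt (Ψ₂ (η + gradMatrix φ x))))
        (unitCube n) volume := integrableOn_unitCube hHc
    have hint2 : IntegrableOn (fun x => ℓ * ‖G x‖ - C₂) (unitCube n) volume :=
      integrableOn_unitCube ((continuous_const.mul hGc.norm).sub continuous_const)
    have hintG : IntegrableOn G (unitCube n) volume := integrableOn_unitCube hGc
    have hintnG : IntegrableOn (fun x => ‖G x‖) (unitCube n) volume :=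
      integrableOn_unitCube hGc.norm
    have hmono : ∫ x in unitCube n, (ℓ * ‖G x‖ - C₂)
        ≤ ∫ x in unitCube n,
          min (Ψ₂ (η + gradMatrix φ x)) (ℓ * Real.sqrt (Ψ₂ (η + gradMatrix φ x))) := by
      refine setIntegral_mono_on hint2 hint1 (measurableSet_unitCube n) ?_
      intro x _
      rw [hieq x]
      have hfr : frob (η + gradMatrix φ x) = ‖G x‖ := by rw [← norm_matToE, map_add]
      have := hlow (η + gradMatrix φ x)
      rw [hfr, hDdEq x] at this
      exact this
    have hsub : ∫ x in unitCube n, (ℓ * ‖G x‖ - C₂)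
        = ℓ * (∫ x in unitCube n, ‖G x‖) - C₂ := by
      rw [integral_sub (hintnG.const_mul ℓ)
        (integrableOn_const (C := C₂) (by
          rw [volume_unitCube]; exact ENNReal.one_ne_top))]
      rw [integral_const_mul, setIntegral_const, measureReal_def, volume_unitCube]
      simp
    have hGint : ∫ x in unitCube n, G x = matToE η := by
      have hc : IntegrableOn (fun _ : Fin n → ℝ =>
          (matToE η : EuclideanSpace ℝ (Fin n × Fin n))) (unitCube n) volume :=
        integrableOn_const (by rw [volume_unitCube]; exact ENNReal.one_ne_top)
      have hg : IntegrableOn (fun x =>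
          (matToE (gradMatrix φ x) : EuclideanSpace ℝ (Fin n × Fin n))) (unitCube n) volume :=
        integrableOn_unitCube (continuous_gradE φ hφ.1)
      rw [hG]
      rw [integral_add hc hg, integral_gradE φ hφ, setIntegral_const, measureReal_def, volume_unitCube]
      simp
    have hnormle : ‖matToE (η : Matrix (Fin n) (Fin n) ℝ)‖ ≤ ∫ x in unitCube n, ‖G x‖ := by
      rw [← hGint]
      exact norm_integral_le_integral_norm G
    have : ℓ * frob η ≤ ℓ * ∫ x in unitCube n, ‖G x‖ := by
      rw [← norm_matToE]
      exact mul_le_mul_of_nonneg_left hnormle hℓ.le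
    linarith
  -- the zero test function
  have hφ0mem : (fun _ : Fin n → ℝ => (0 : Fin n → ℝ)) ∈ testFuns n n := by
    have hts : tsupport (fun _ : Fin n → ℝ => (0 : Fin n → ℝ)) = ∅ := by
      simp [tsupport, Function.support]
    refine ⟨contDiff_const, ?_, ?_⟩
    · show IsCompact (tsupport _)
      rw [hts]; exact isCompact_empty
    · rw [hts]; exact empty_subset _
  have hgrad0 : ∀ x : Fin n → ℝ, gradMatrix (fun _ : Fin n → ℝ => (0 : Fin n → ℝ)) x = 0 := by
    intro x
    funext i j
    simp [gradMatrix]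
  have hmem0 : ∀ η : Matrix (Fin n) (Fin n) ℝ,
      min (Ψ₂ η) (ℓ * Real.sqrt (Ψ₂ η)) ∈
        {y | ∃ φ ∈ testFuns n n, y = ∫ x in unitCube n,
          min (Ψ₂ (η + gradMatrix φ x)) (ℓ * Real.sqrt (Ψ₂ (η + gradMatrix φ x)))} := by
    intro η
    refine ⟨_, hφ0mem, ?_⟩
    simp only [hgrad0, add_zero]
    rw [setIntegral_const, measureReal_def, volume_unitCube]
    simp
  have hQlow : ∀ η, ℓ * frob η - C₂ ≤
      qcEnv (fun η => min (Ψ₂ η) (ℓ * Real.sqrt (Ψ₂ η))) η := by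
    intro η
    refine le_csInf ⟨_, hmem0 η⟩ ?_
    rintro y ⟨φ, hφ, rfl⟩
    exact hintlow η φ hφ
  have hQup : ∀ η, qcEnv (fun η => min (Ψ₂ η) (ℓ * Real.sqrt (Ψ₂ η))) η
      ≤ ℓ * frob η + C₂ := by
    intro η
    have h1 : qcEnv (fun η => min (Ψ₂ η) (ℓ * Real.sqrt (Ψ₂ η))) η
        ≤ min (Ψ₂ η) (ℓ * Real.sqrt (Ψ₂ η)) := by
      refine csInf_le ⟨ℓ * frob η - C₂, ?_⟩ (hmem0 η)
      rintro y ⟨φ, hφ, rfl⟩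
      exact hintlow η φ hφ
    calc qcEnv (fun η => min (Ψ₂ η) (ℓ * Real.sqrt (Ψ₂ η))) η
        ≤ min (Ψ₂ η) (ℓ * Real.sqrt (Ψ₂ η)) := h1
    _ = min ((Dd η) ^ 2) (ℓ * Dd η) := hval η
    _ ≤ ℓ * frob η + C₂ := hup η
  have hQbound : ∀ η, |qcEnv (fun η => min (Ψ₂ η) (ℓ * Real.sqrt (Ψ₂ η))) η
      - ℓ * frob η| ≤ C₂ := by
    intro η
    exact abs_le.mpr ⟨by linarith [hQlow η], by linarith [hQup η]⟩
  refine ⟨fun ξ => ⟨(part1 ξ).limsup_eq, part1 ξ⟩, fun ξ => ?_⟩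
  have := tendsto_of_bound (qcEnv (fun η => min (Ψ₂ η) (ℓ * Real.sqrt (Ψ₂ η)))) ℓ C₂ hQbound ξ
  simpa only [recession] using this.limsup_eq
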